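/- arXiv:1302.5325 — 2 statements merged into one kernel-verified Lean document; each statement's English description precedes it below -/
import Mathlib

section
/- For every polynomial p with complex coefficients there exist a unique complex number c and a unique polynomial q with complex coefficients such that p = c + q′ − X·q; moreover c = E(p), the Gaussian expectation of p. In particular, the quotient of C[X] by the image of the linear map q ↦ q′ − X·q is one-dimensional, spanned by the class of the constant polynomial 1. -/
/-!
Write `T q = q' - X q`. For `q ≠ 0`, `T q` has degree `deg q + 1` and leading coefficient
`-lc q`, so `T q` is never a constant; this gives uniqueness. Existence comes from the Hermite
polynomials: `H₀ = 1` and `Hₙ₊₁ = -T Hₙ`, and the `Hₙ` are monic of degree `n`, so they span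
`R[X]`. Finally `(T q)(x) e^{-x²/2}` is the derivative of `q(x) e^{-x²/2}`, so its integral over
`ℝ` vanishes and `E(c + T q) = c`.
-/

open Polynomial MeasureTheory

noncomputable def gaussianExpectation (p : Polynomial ℂ) : ℂ :=
  (∫ x : ℝ, p.eval (x : ℂ) * Real.exp (-x ^ 2 / 2)) /
    (∫ x : ℝ, (Real.exp (-x ^ 2 / 2) : ℂ))

noncomputable def gaussianDifferential : Polynomial ℂ →ₗ[ℂ] Polynomial ℂ :=
  derivative - LinearMap.mulLeft ℂ (X : Polynomial ℂ)

namespace Polynomial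

section Algebra

variable {R : Type*} [CommRing R]

theorem coeff_derivative_sub_X_mul_natDegree_succ (q : R[X]) :
    (derivative q - X * q).coeff (q.natDegree + 1) = -q.leadingCoeff := by
  rw [coeff_sub, coeff_derivative, coeff_X_mul,
    coeff_eq_zero_of_natDegree_lt (by omega : q.natDegree < q.natDegree + 1 + 1)]
  simp only [zero_mul, zero_sub, leadingCoeff]

theorem eq_zero_of_derivative_sub_X_mul_eq_C {q : R[X]} {c : R}
    (h : derivative q - X * q = C c) : q = 0 := by
  have hcoeff := coeff_derivative_sub_X_mul_natDegree_succ q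
  rw [h, coeff_C, if_neg q.natDegree.succ_ne_zero, zero_eq_neg] at hcoeff
  exact leadingCoeff_eq_zero.mp hcoeff

theorem injective_C_add_derivative_sub_X_mul :
    Function.Injective fun cq : R × R[X] => C cq.1 + (derivative cq.2 - X * cq.2) := by
  rintro ⟨c, q⟩ ⟨c', q'⟩ h
  dsimp only at h
  have hq : q = q' := sub_eq_zero.mp <| eq_zero_of_derivative_sub_X_mul_eq_C (c := c' - c) <| by
    rw [derivative_sub, C_sub]
    linear_combination h
  subst hq
  rw [C_injective (by linear_combination h : C c = C c')]

theorem map_hermite_succ (n : ℕ) :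
    (hermite (n + 1)).map (Int.castRingHom R) =
      -(derivative ((hermite n).map (Int.castRingHom R)) -
        X * (hermite n).map (Int.castRingHom R)) := by
  rw [hermite_succ, Polynomial.map_sub, Polynomial.map_mul, map_X, derivative_map]
  ring

noncomputable def hermiteSequence (R : Type*) [CommRing R] [Nontrivial R] : Sequence R where
  elems' n := (hermite n).map (Int.castRingHom R)
  degree_eq' n := by rw [(hermite_monic n).degree_map (Int.castRingHom R), degree_hermite]

theorem span_range_hermiteSequence [Nontrivial R] :
    Submodule.span R (Set.range (hermiteSequence R)) = ⊤ :=
  (hermiteSequence R).span fun n => by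
    simp [hermiteSequence, ((hermite_monic n).map _).leadingCoeff]

theorem exists_eq_C_add_derivative_sub_X_mul [Nontrivial R] (p : R[X]) :
    ∃ c q, p = C c + (derivative q - X * q) := by
  have hp : p ∈ Submodule.span R (Set.range (hermiteSequence R)) := by
    rw [span_range_hermiteSequence]
    exact Submodule.mem_top
  induction hp using Submodule.span_induction with
  | mem _ hmem =>
    obtain ⟨n, rfl⟩ := hmem
    cases n with
    | zero => exact ⟨1, 0, by simp [hermiteSequence]⟩
    | succ n =>
      refine ⟨0, -(hermiteSequence R n), ?_⟩
      rw [C_0, zero_add, derivative_neg]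
      simp only [hermiteSequence, map_hermite_succ]
      ring
  | zero => exact ⟨0, 0, by simp⟩
  | add _ _ _ _ hp hp' =>
    obtain ⟨c, q, rfl⟩ := hp
    obtain ⟨c', q', rfl⟩ := hp'
    exact ⟨c + c', q + q', by rw [C_add, derivative_add]; ring⟩
  | smul a _ _ hp =>
    obtain ⟨c, q, rfl⟩ := hp
    exact ⟨a * c, C a * q, by rw [smul_eq_C_mul, C_mul, derivative_C_mul]; ring⟩

end Algebra

end Polynomial

theorem gaussianDifferential_apply (q : ℂ[X]) :
    gaussianDifferential q = derivative q - X * q :=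
  rfl

theorem mkQ_range_gaussianDifferential_one_ne_zero :
    (LinearMap.range gaussianDifferential).mkQ (1 : ℂ[X]) ≠ 0 := by
  rw [Ne, Submodule.mkQ_apply, Submodule.Quotient.mk_eq_zero]
  rintro ⟨q, hq⟩
  rw [gaussianDifferential_apply, ← C_1] at hq
  rw [eq_zero_of_derivative_sub_X_mul_eq_C hq, derivative_zero, mul_zero, sub_zero] at hq
  exact one_ne_zero (C_eq_zero.mp hq.symm)

theorem exists_smul_mkQ_range_gaussianDifferential_one
    (w : ℂ[X] ⧸ LinearMap.range gaussianDifferential) :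
    ∃ c : ℂ, c • (LinearMap.range gaussianDifferential).mkQ (1 : ℂ[X]) = w := by
  obtain ⟨p, rfl⟩ := Submodule.mkQ_surjective _ w
  obtain ⟨c, q, rfl⟩ := exists_eq_C_add_derivative_sub_X_mul p
  refine ⟨c, ?_⟩
  rw [← map_smul, smul_eq_C_mul, mul_one, Submodule.mkQ_apply, Submodule.mkQ_apply,
    Submodule.Quotient.eq]
  exact ⟨-q, by rw [map_neg, gaussianDifferential_apply]; ring⟩

section Analysis

theorem integrable_eval_mul_exp_neg_sq_div_two (p : ℂ[X]) :
    Integrable fun x : ℝ => p.eval (x : ℂ) * (Real.exp (-x ^ 2 / 2) : ℂ) := by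
  induction p using Polynomial.induction_on' with
  | add p q hp hq => simpa only [eval_add, add_mul, Pi.add_def] using hp.add hq
  | monomial n a =>
    have hreal : Integrable fun x : ℝ => x ^ n * Real.exp (-x ^ 2 / 2) := by
      refine (integrable_rpow_mul_exp_neg_mul_sq (b := 1 / 2) (by norm_num)
        (neg_one_lt_zero.trans_le n.cast_nonneg)).congr (.of_forall fun x => ?_)
      dsimp only
      rw [Real.rpow_natCast]
      ring_nf
    have hcomplex : Integrable fun x : ℝ => ((x ^ n * Real.exp (-x ^ 2 / 2) : ℝ) : ℂ) :=
      hreal.ofReal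
    refine (hcomplex.const_mul a).congr (.of_forall fun x => ?_)
    simp only [eval_monomial, Complex.ofReal_mul, Complex.ofReal_pow]
    ring

theorem hasDerivAt_eval_mul_exp_neg_sq_div_two (q : ℂ[X]) (x : ℝ) :
    HasDerivAt (fun y : ℝ => q.eval (y : ℂ) * (Real.exp (-y ^ 2 / 2) : ℂ))
      ((derivative q - X * q).eval (x : ℂ) * (Real.exp (-x ^ 2 / 2) : ℂ)) x := by
  have hq : HasDerivAt (fun y : ℝ => q.eval (y : ℂ)) ((derivative q).eval (x : ℂ)) x :=
    (q.hasDerivAt (x : ℂ)).comp_ofReal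
  have hexp : HasDerivAt (fun y : ℝ => Real.exp (-y ^ 2 / 2))
      (Real.exp (-x ^ 2 / 2) * (-(2 * x ^ 1) / 2)) x :=
    ((hasDerivAt_pow 2 x).neg.div_const 2).exp
  refine (hq.fun_mul hexp.ofReal_comp).congr_deriv ?_
  simp only [eval_sub, eval_mul, eval_X]
  push_cast
  ring

theorem integral_eval_derivative_sub_X_mul_mul_exp_neg_sq_div_two (q : ℂ[X]) :
    ∫ x : ℝ, (derivative q - X * q).eval (x : ℂ) * (Real.exp (-x ^ 2 / 2) : ℂ) = 0 :=
  integral_eq_zero_of_hasDerivAt_of_integrable (hasDerivAt_eval_mul_exp_neg_sq_div_two q)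
    (integrable_eval_mul_exp_neg_sq_div_two _) (integrable_eval_mul_exp_neg_sq_div_two q)

theorem integral_exp_neg_sq_div_two_ne_zero :
    ∫ x : ℝ, (Real.exp (-x ^ 2 / 2) : ℂ) ≠ 0 := by
  have hpos : 0 < ∫ x : ℝ, Real.exp (-x ^ 2 / 2) := by
    have hrewrite :
        (fun x : ℝ => Real.exp (-x ^ 2 / 2)) = fun x => Real.exp (-(1 / 2) * x ^ 2) := by
      ext x
      ring_nf
    rw [hrewrite, integral_gaussian]
    positivity
  rw [integral_complex_ofReal]
  exact_mod_cast hpos.ne'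

theorem gaussianExpectation_C_add_derivative_sub_X_mul (c : ℂ) (q : ℂ[X]) :
    gaussianExpectation (C c + (derivative q - X * q)) = c := by
  have hnum : ∫ x : ℝ, (C c + (derivative q - X * q)).eval (x : ℂ) * (Real.exp (-x ^ 2 / 2) : ℂ)
      = c * ∫ x : ℝ, (Real.exp (-x ^ 2 / 2) : ℂ) := by
    simp only [eval_add, add_mul]
    rw [integral_add (integrable_eval_mul_exp_neg_sq_div_two (C c))
        (integrable_eval_mul_exp_neg_sq_div_two _),
      integral_eval_derivative_sub_X_mul_mul_exp_neg_sq_div_two, add_zero]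
    simp only [eval_C, integral_const_mul]
  rw [gaussianExpectation, hnum, mul_div_assoc, div_self integral_exp_neg_sq_div_two_ne_zero,
    mul_one]

end Analysis

theorem gaussian_homology_decomposition :
    (∀ p : Polynomial ℂ,
      ∃! cq : ℂ × Polynomial ℂ,
        p = C cq.1 + (derivative cq.2 - X * cq.2)) ∧
    (∀ (p : Polynomial ℂ) (c : ℂ) (q : Polynomial ℂ),
      p = C c + (derivative q - X * q) → c = gaussianExpectation p) ∧
    Module.finrank ℂ (Polynomial ℂ ⧸ LinearMap.range gaussianDifferential) = 1 ∧
    Submodule.span ℂ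
        {(LinearMap.range gaussianDifferential).mkQ (1 : Polynomial ℂ)} = ⊤ := by
  refine ⟨fun p => ?_, fun p c q hp => ?_, ?_, ?_⟩
  · obtain ⟨c, q, hp⟩ := exists_eq_C_add_derivative_sub_X_mul p
    exact ⟨(c, q), hp, fun cq hcq => injective_C_add_derivative_sub_X_mul (hcq.symm.trans hp)⟩
  · rw [hp, gaussianExpectation_C_add_derivative_sub_X_mul]
  · exact finrank_eq_one _ mkQ_range_gaussianDifferential_one_ne_zero
      exists_smul_mkQ_range_gaussianDifferential_one
  · exact Submodule.eq_top_iff'.mpr fun w =>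
      Submodule.mem_span_singleton.mpr (exists_smul_mkQ_range_gaussianDifferential_one w)
end

section
/- The Gaussian expectation is the unique linear functional E on the space of polynomials with complex coefficients such that E(1) = 1 and E(q′ − X·q) = 0 for every polynomial q with complex coefficients. -/
/-!
Writing `S q = q′ - X q` (Stein's operator), `(q e^{-x²/2})′ = (S q) e^{-x²/2}` is integrable
with integrable primitive, so its integral over `ℝ` vanishes: the Gaussian expectation kills the
image of `S`. Conversely `X^{n+1} = -S(X^n) + n X^{n-1}`, so a linear functional killing the image
of `S` obeys the moment recursion `L(X^{n+1}) = n L(X^{n-1})` and is determined by `L 1`.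
-/

open Polynomial MeasureTheory

namespace Polynomial

variable {R M : Type*} [CommRing R] [AddCommGroup M] [Module R M]

-- For `n = 0` the truncated `n - 1` is harmless: its coefficient is `0`.
lemma X_pow_succ_eq_stein (n : ℕ) :
    (X : R[X]) ^ (n + 1) = -(derivative (X ^ n) - X * X ^ n) + (n : R) • X ^ (n - 1) := by
  rw [derivative_X_pow, smul_eq_C_mul]
  ring

lemma map_X_pow_succ_of_stein {L : R[X] →ₗ[R] M}
    (hL : ∀ q : R[X], L (derivative q - X * q) = 0) (n : ℕ) :
    L (X ^ (n + 1)) = (n : R) • L (X ^ (n - 1)) := by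
  rw [X_pow_succ_eq_stein, map_add, map_neg, hL, neg_zero, zero_add, map_smul]

lemma linearMap_eq_zero_of_stein {L : R[X] →ₗ[R] M} (h1 : L 1 = 0)
    (hL : ∀ q : R[X], L (derivative q - X * q) = 0) : L = 0 := by
  have hX_pow : ∀ n, L (X ^ n) = 0 := by
    intro n
    induction n using Nat.twoStepInduction with
    | zero => simpa using h1
    | one => simpa using map_X_pow_succ_of_stein hL 0
    | more n ih _ => rw [map_X_pow_succ_of_stein hL, Nat.add_sub_cancel, ih, smul_zero]
  ext n
  simpa [monomial_one_right_eq_X_pow] using hX_pow n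

lemma linearMap_ext_of_stein {L₁ L₂ : R[X] →ₗ[R] M} (h1 : L₁ 1 = L₂ 1)
    (hL₁ : ∀ q : R[X], L₁ (derivative q - X * q) = 0)
    (hL₂ : ∀ q : R[X], L₂ (derivative q - X * q) = 0) : L₁ = L₂ :=
  sub_eq_zero.mp <| linearMap_eq_zero_of_stein (by simp [h1]) fun q => by simp [hL₁, hL₂]

end Polynomial

open Real

lemma integrable_eval_mul_exp_neg_mul_sq {b : ℝ} (hb : 0 < b) (p : ℂ[X]) :
    Integrable fun x : ℝ => p.eval (x : ℂ) * (rexp (-b * x ^ 2) : ℂ) := by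
  induction p using Polynomial.induction_on' with
  | add p q hp hq =>
    refine (hp.add hq).congr (.of_forall fun x => ?_)
    simp only [Pi.add_apply, eval_add, add_mul]
  | monomial n a =>
    have hmoment : Integrable fun x : ℝ => x ^ n * rexp (-b * x ^ 2) := by
      simpa [rpow_natCast] using
        integrable_rpow_mul_exp_neg_mul_sq hb (s := n) (neg_one_lt_zero.trans_le n.cast_nonneg)
    refine (hmoment.ofReal.const_mul a).congr (.of_forall fun x => ?_)
    simp [mul_assoc]

lemma integrable_eval_mul_gaussian (p : ℂ[X]) :
    Integrable fun x : ℝ => p.eval (x : ℂ) * (rexp (-x ^ 2 / 2) : ℂ) := by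
  simpa [neg_div, div_eq_inv_mul] using
    integrable_eval_mul_exp_neg_mul_sq (b := 1 / 2) one_half_pos p

lemma hasDerivAt_eval_mul_gaussian (q : ℂ[X]) (x : ℝ) :
    HasDerivAt (fun y : ℝ => q.eval (y : ℂ) * (rexp (-y ^ 2 / 2) : ℂ))
      ((derivative q - X * q).eval (x : ℂ) * (rexp (-x ^ 2 / 2) : ℂ)) x := by
  have hq : HasDerivAt (fun y : ℝ => q.eval (y : ℂ)) ((derivative q).eval (x : ℂ)) x :=
    (q.hasDerivAt x).comp_ofReal
  have hgauss : HasDerivAt (fun y : ℝ => rexp (-y ^ 2 / 2)) (-x * rexp (-x ^ 2 / 2)) x := by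
    refine ((hasDerivAt_pow 2 x).neg.div_const 2).exp.congr_deriv ?_
    simp only [Pi.neg_apply, Nat.cast_ofNat, pow_one, Nat.add_one_sub_one]
    ring
  refine (hq.mul hgauss.ofReal_comp).congr_deriv ?_
  simp only [eval_sub, eval_mul, eval_X]
  push_cast
  ring

lemma integral_eval_stein_mul_gaussian (q : ℂ[X]) :
    ∫ x : ℝ, (derivative q - X * q).eval (x : ℂ) * (rexp (-x ^ 2 / 2) : ℂ) = 0 :=
  integral_eq_zero_of_hasDerivAt_of_integrable (hasDerivAt_eval_mul_gaussian q)
    (integrable_eval_mul_gaussian _) (integrable_eval_mul_gaussian q)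

lemma integral_gaussian_ne_zero : ∫ x : ℝ, (rexp (-x ^ 2 / 2) : ℂ) ≠ 0 := by
  have hcast : ∫ x : ℝ, (rexp (-x ^ 2 / 2) : ℂ) =
      ((∫ x : ℝ, rexp (-x ^ 2 / 2) : ℝ) : ℂ) := integral_ofReal
  rw [hcast, Complex.ofReal_ne_zero]
  simp_rw [show ∀ x : ℝ, -x ^ 2 / 2 = -(1 / 2) * x ^ 2 from fun x => by ring, integral_gaussian]
  positivity

lemma gaussianExpectation_one : gaussianExpectation 1 = 1 := by
  simpa [gaussianExpectation] using div_self integral_gaussian_ne_zero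

lemma gaussianExpectation_stein (q : ℂ[X]) :
    gaussianExpectation (derivative q - X * q) = 0 := by
  rw [gaussianExpectation, integral_eval_stein_mul_gaussian, zero_div]

noncomputable def gaussianExpectationₗ : ℂ[X] →ₗ[ℂ] ℂ where
  toFun := gaussianExpectation
  map_add' p r := by
    simp only [gaussianExpectation, eval_add, add_mul, ← add_div]
    rw [integral_add (integrable_eval_mul_gaussian p) (integrable_eval_mul_gaussian r)]
  map_smul' c p := by
    simp only [gaussianExpectation, eval_smul, smul_eq_mul, mul_assoc, integral_const_mul,
      RingHom.id_apply, mul_div_assoc]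

theorem gaussian_expectation_unique :
    gaussianExpectation 1 = 1 ∧
    (∀ q : Polynomial ℂ, gaussianExpectation (derivative q - X * q) = 0) ∧
    (∀ L : Polynomial ℂ →ₗ[ℂ] ℂ, L 1 = 1 →
      (∀ q : Polynomial ℂ, L (derivative q - X * q) = 0) →
      ∀ p : Polynomial ℂ, L p = gaussianExpectation p) := by
  refine ⟨gaussianExpectation_one, gaussianExpectation_stein, fun L hL1 hL p => ?_⟩
  have hL_eq : L = gaussianExpectationₗ :=
    linearMap_ext_of_stein (hL1.trans gaussianExpectation_one.symm) hL gaussianExpectation_stein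
  exact LinearMap.congr_fun hL_eq p
end
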